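/- Define the integral operator $\omega_{t,T}^{(k,l)} = \int_t^T l_u\, e^{\int_0^u k_z dz}\,du$ and its iterated version $\omega_{t,T}^{(k^{(2)},l^{(2)}),(k^{(1)},l^{(1)})} = \int_t^T l^{(2)}_{u_2} e^{\int_0^{u_2} k^{(2)}_z dz} \left(\int_{u_2}^T l^{(1)}_{u_1} e^{\int_0^{u_1} k^{(1)}_z dz}\,du_1\right) du_2$ (and similarly with four levels). Then for integrable functions $k^{(1)}, k^{(2)}, l^{(1)}, l^{(2)}$: $\left(\omega_{0,T}^{(k^{(2)},l^{(2)}),(k^{(1)},l^{(1)})}\right)^2 = 2\,\omega_{0,T}^{(k^{(2)},l^{(2)}),(k^{(1)},l^{(1)}),(k^{(2)},l^{(2)}),(k^{(1)},l^{(1)})} + 4\,\omega_{0,T}^{(k^{(2)},l^{(2)}),(k^{(2)},l^{(2)}),(k^{(1)},l^{(1)}),(k^{(1)},l^{(1)})}$. -/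
import Mathlib

open MeasureTheory Real

/-- The integral operator `ω_{t,T}^{(k,l)} = ∫_t^T l_u e^{∫_0^u k_z dz} du`. -/
noncomputable def w1 (k l : ℝ → ℝ) (t T : ℝ) : ℝ :=
  ∫ u in t..T, l u * Real.exp (∫ z in (0:ℝ)..u, k z)

/-- The 2-fold iterated integral operator. -/
noncomputable def w2 (k2 l2 k1 l1 : ℝ → ℝ) (t T : ℝ) : ℝ :=
  w1 k2 (fun u => l2 u * w1 k1 l1 u T) t T

/-- The 3-fold iterated integral operator. -/
noncomputable def w3 (k3 l3 k2 l2 k1 l1 : ℝ → ℝ) (t T : ℝ) : ℝ :=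
  w1 k3 (fun u => l3 u * w2 k2 l2 k1 l1 u T) t T

/-- The 4-fold iterated integral operator. -/
noncomputable def w4 (k4 l4 k3 l3 k2 l2 k1 l1 : ℝ → ℝ) (t T : ℝ) : ℝ :=
  w1 k4 (fun u => l4 u * w3 k3 l3 k2 l2 k1 l1 u T) t T

open Set in
/-- Product of two integrals over `[a,b]` as a sum of two iterated integrals
(triangle Fubini / integration by parts). -/
lemma prod_integral_eq {a b : ℝ} (hab : a ≤ b) {φ ψ : ℝ → ℝ}
    (hφ : IntegrableOn φ (Icc a b)) (hψ : IntegrableOn ψ (Icc a b)) :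
    (∫ u in a..b, φ u) * (∫ u in a..b, ψ u)
      = (∫ u in a..b, φ u * ∫ v in u..b, ψ v)
        + (∫ u in a..b, ψ u * ∫ v in u..b, φ v) := by
  have hφu : IntegrableOn φ (uIcc a b) := by rwa [uIcc_of_le hab]
  have hψu : IntegrableOn ψ (uIcc a b) := by rwa [uIcc_of_le hab]
  have hPφ : ContinuousOn (fun x => ∫ t in a..x, φ t) (Icc a b) := by
    have := intervalIntegral.continuousOn_primitive_interval (μ := volume) hφu
    rwa [uIcc_of_le hab] at this
  have hPφ' : ContinuousOn (fun x => ∫ t in x..b, φ t) (Icc a b) := by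
    have := intervalIntegral.continuousOn_primitive_interval_left (μ := volume) hφu
    rwa [uIcc_of_le hab] at this
  have hmS : MeasurableSet {q : ℝ × ℝ | q.1 ≤ q.2} :=
    measurableSet_le measurable_fst measurable_snd
  have hInt : Integrable
      (Function.uncurry fun u v =>
        ({q : ℝ × ℝ | q.1 ≤ q.2}).indicator (fun q => φ q.1 * ψ q.2) (u, v))
      ((volume.restrict (Icc a b)).prod (volume.restrict (Icc a b))) :=
    (hφ.mul_prod hψ).indicator hmS
  have swap := MeasureTheory.integral_integral_swap hInt
  have e1 : ∀ u ∈ Icc a b,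
      (∫ v, ({q : ℝ × ℝ | q.1 ≤ q.2}).indicator (fun q => φ q.1 * ψ q.2) (u, v)
        ∂(volume.restrict (Icc a b))) = φ u * ∫ v in Icc u b, ψ v := by
    intro u hu
    have hfun : (fun v => ({q : ℝ × ℝ | q.1 ≤ q.2}).indicator (fun q => φ q.1 * ψ q.2) (u, v))
        = (Ici u).indicator (fun v => φ u * ψ v) := by
      ext v; by_cases h : u ≤ v <;> simp [Set.indicator, h]
    rw [hfun, MeasureTheory.integral_indicator measurableSet_Ici,
      Measure.restrict_restrict measurableSet_Ici,
      show Ici u ∩ Icc a b = Icc u b by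
        ext x; simp only [mem_inter_iff, mem_Ici, mem_Icc]
        exact ⟨fun h => ⟨h.1, h.2.2⟩, fun h => ⟨h.1, hu.1.trans h.1, h.2⟩⟩,
      MeasureTheory.integral_const_mul]
  have e2 : ∀ v ∈ Icc a b,
      (∫ u, ({q : ℝ × ℝ | q.1 ≤ q.2}).indicator (fun q => φ q.1 * ψ q.2) (u, v)
        ∂(volume.restrict (Icc a b))) = ψ v * ∫ u in Icc a v, φ u := by
    intro v hv
    have hfun : (fun u => ({q : ℝ × ℝ | q.1 ≤ q.2}).indicator (fun q => φ q.1 * ψ q.2) (u, v))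
        = (Iic v).indicator (fun u => φ u * ψ v) := by
      ext u; by_cases h : u ≤ v <;> simp [Set.indicator, h]
    rw [hfun, MeasureTheory.integral_indicator measurableSet_Iic,
      Measure.restrict_restrict measurableSet_Iic,
      show Iic v ∩ Icc a b = Icc a v by
        ext x; simp only [mem_inter_iff, mem_Iic, mem_Icc]
        exact ⟨fun h => ⟨h.2.1, h.1⟩, fun h => ⟨h.2, h.1, h.2.trans hv.2⟩⟩,
      MeasureTheory.integral_mul_const]
    exact mul_comm _ _
  have tri : (∫ u in Icc a b, φ u * ∫ v in Icc u b, ψ v)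
      = ∫ v in Icc a b, ψ v * ∫ u in Icc a v, φ u := by
    rw [← MeasureTheory.setIntegral_congr_fun measurableSet_Icc e1,
      ← MeasureTheory.setIntegral_congr_fun measurableSet_Icc e2]
    exact swap
  have c1 : (∫ u in a..b, φ u * ∫ v in u..b, ψ v)
      = ∫ u in Icc a b, φ u * ∫ v in Icc u b, ψ v := by
    rw [intervalIntegral.integral_of_le hab, ← MeasureTheory.integral_Icc_eq_integral_Ioc]
    exact MeasureTheory.setIntegral_congr_fun measurableSet_Icc fun u hu => by
      rw [intervalIntegral.integral_of_le hu.2, ← MeasureTheory.integral_Icc_eq_integral_Ioc]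
  have c2 : (∫ v in a..b, ψ v * ∫ u in a..v, φ u)
      = ∫ v in Icc a b, ψ v * ∫ u in Icc a v, φ u := by
    rw [intervalIntegral.integral_of_le hab, ← MeasureTheory.integral_Icc_eq_integral_Ioc]
    exact MeasureTheory.setIntegral_congr_fun measurableSet_Icc fun v hv => by
      rw [intervalIntegral.integral_of_le hv.1, ← MeasureTheory.integral_Icc_eq_integral_Ioc]
  have tri' : (∫ u in a..b, φ u * ∫ v in u..b, ψ v)
      = ∫ u in a..b, ψ u * ∫ v in a..u, φ v := by rw [c1, c2, tri]
  have II1 : IntervalIntegrable (fun u => ψ u * ∫ v in a..u, φ v) volume a b := by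
    have := hψ.mul_continuousOn hPφ isCompact_Icc
    rw [← uIcc_of_le hab] at this
    exact this.intervalIntegrable
  have II2 : IntervalIntegrable (fun u => ψ u * ∫ v in u..b, φ v) volume a b := by
    have := hψ.mul_continuousOn hPφ' isCompact_Icc
    rw [← uIcc_of_le hab] at this
    exact this.intervalIntegrable
  have hsplit : ∀ u ∈ Icc a b,
      (∫ v in a..u, φ v) + (∫ v in u..b, φ v) = ∫ v in a..b, φ v := by
    intro u hu
    refine intervalIntegral.integral_add_adjacent_intervals ?_ ?_
    · have : IntegrableOn φ (uIcc a u) := by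
        rw [uIcc_of_le hu.1]; exact hφ.mono_set (Icc_subset_Icc le_rfl hu.2)
      exact this.intervalIntegrable
    · have : IntegrableOn φ (uIcc u b) := by
        rw [uIcc_of_le hu.2]; exact hφ.mono_set (Icc_subset_Icc hu.1 le_rfl)
      exact this.intervalIntegrable
  calc (∫ u in a..b, φ u) * (∫ u in a..b, ψ u)
      = ∫ u in a..b, ψ u * ∫ v in a..b, φ v := by
        rw [intervalIntegral.integral_mul_const, mul_comm]
    _ = ∫ u in a..b, ((ψ u * ∫ v in a..u, φ v) + ψ u * ∫ v in u..b, φ v) := by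
        refine intervalIntegral.integral_congr fun u hu => ?_
        rw [uIcc_of_le hab] at hu
        rw [← hsplit u hu]; ring
    _ = (∫ u in a..b, ψ u * ∫ v in a..u, φ v) + ∫ u in a..b, ψ u * ∫ v in u..b, φ v :=
        intervalIntegral.integral_add II1 II2
    _ = (∫ u in a..b, φ u * ∫ v in u..b, ψ v) + ∫ u in a..b, ψ u * ∫ v in u..b, φ v := by
        rw [tri']

open Set in
lemma contPrimLeft {c d : ℝ} (h : c ≤ d) {f : ℝ → ℝ} (hf : IntegrableOn f (Icc c d)) :
    ContinuousOn (fun x => ∫ t in x..d, f t) (Icc c d) := by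
  have hf' : IntegrableOn f (uIcc c d) := by rwa [uIcc_of_le h]
  have := intervalIntegral.continuousOn_primitive_interval_left (μ := volume) hf'
  rwa [uIcc_of_le h] at this

open Set in
lemma toII {c d : ℝ} (h : c ≤ d) {f : ℝ → ℝ} (hf : IntegrableOn f (Icc c d)) :
    IntervalIntegrable f volume c d := by
  have hf' : IntegrableOn f (uIcc c d) := by rwa [uIcc_of_le h]
  exact hf'.intervalIntegrable

open Set in
/-- Shuffle-product identity for the square of a twice-iterated integral. -/
lemma key_shuffle {T : ℝ} (hT : 0 ≤ T) {f g : ℝ → ℝ}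
    (hf : IntegrableOn f (Icc 0 T)) (hg : IntegrableOn g (Icc 0 T)) :
    (∫ u in (0:ℝ)..T, f u * ∫ v in u..T, g v) ^ 2
      = 2 * (∫ u in (0:ℝ)..T, f u * ∫ v in u..T, g v *
            ∫ s in v..T, f s * ∫ t in s..T, g t)
        + 4 * (∫ u in (0:ℝ)..T, f u * ∫ v in u..T, f v *
            ∫ s in v..T, g s * ∫ t in s..T, g t) := by
  set G : ℝ → ℝ := fun u => ∫ v in u..T, g v with hGd
  set F : ℝ → ℝ := fun u => f u * G u with hFd
  set W : ℝ → ℝ := fun u => ∫ v in u..T, F v with hWd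
  set Q : ℝ → ℝ := fun v => ∫ s in v..T, g s * G s with hQd
  set X : ℝ → ℝ := fun u => ∫ v in u..T, g v * W v with hXd
  set Y : ℝ → ℝ := fun u => ∫ v in u..T, f v * Q v with hYd
  have hGc : ContinuousOn G (Icc 0 T) := contPrimLeft hT hg
  have hFi : IntegrableOn F (Icc 0 T) := hf.mul_continuousOn hGc isCompact_Icc
  have hWc : ContinuousOn W (Icc 0 T) := contPrimLeft hT hFi
  have hgG : IntegrableOn (fun s => g s * G s) (Icc 0 T) := hg.mul_continuousOn hGc isCompact_Icc
  have hQc : ContinuousOn Q (Icc 0 T) := contPrimLeft hT hgG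
  have hgW : IntegrableOn (fun v => g v * W v) (Icc 0 T) := hg.mul_continuousOn hWc isCompact_Icc
  have hfQ : IntegrableOn (fun v => f v * Q v) (Icc 0 T) := hf.mul_continuousOn hQc isCompact_Icc
  have hXc : ContinuousOn X (Icc 0 T) := contPrimLeft hT hgW
  have hYc : ContinuousOn Y (Icc 0 T) := contPrimLeft hT hfQ
  have hGsq : ∀ v ∈ Icc 0 T, G v * G v = 2 * Q v := by
    intro v hv
    have hgv : IntegrableOn g (Icc v T) := hg.mono_set (Icc_subset_Icc hv.1 le_rfl)
    have := prod_integral_eq hv.2 hgv hgv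
    simp only [hGd, hQd]
    rw [this]; ring
  have hGW : ∀ u ∈ Icc 0 T, G u * W u = X u + 2 * Y u := by
    intro u hu
    have hgu : IntegrableOn g (Icc u T) := hg.mono_set (Icc_subset_Icc hu.1 le_rfl)
    have hFu : IntegrableOn F (Icc u T) := hFi.mono_set (Icc_subset_Icc hu.1 le_rfl)
    have p1 := prod_integral_eq hu.2 hgu hFu
    have p2 : (∫ v in u..T, F v * ∫ s in v..T, g s) = 2 * Y u := by
      have c : (∫ v in u..T, F v * ∫ s in v..T, g s)
          = ∫ v in u..T, 2 * (f v * Q v) := by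
        refine intervalIntegral.integral_congr fun v hv => ?_
        rw [uIcc_of_le hu.2] at hv
        have hv' : v ∈ Icc 0 T := ⟨hu.1.trans hv.1, hv.2⟩
        have e : F v * (∫ s in v..T, g s) = f v * (G v * G v) := by
          simp only [hFd, hGd]; ring
        rw [e, hGsq v hv']; ring
      rw [c, intervalIntegral.integral_const_mul, hYd]
    have lhs : G u * W u = (∫ v in u..T, g v) * ∫ v in u..T, F v := by
      simp only [hGd, hWd]
    rw [lhs, p1, p2]
  have s1 : (W 0) ^ 2 = 2 * ∫ u in (0:ℝ)..T, F u * W u := by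
    have := prod_integral_eq hT hFi hFi
    rw [sq]
    simp only [hWd]
    rw [this]; ring
  have s2 : (∫ u in (0:ℝ)..T, F u * W u)
      = (∫ u in (0:ℝ)..T, f u * X u) + 2 * ∫ u in (0:ℝ)..T, f u * Y u := by
    have c : (∫ u in (0:ℝ)..T, F u * W u)
        = ∫ u in (0:ℝ)..T, (f u * X u + 2 * (f u * Y u)) := by
      refine intervalIntegral.integral_congr fun u hu => ?_
      rw [uIcc_of_le hT] at hu
      have e : F u * W u = f u * (G u * W u) := by simp only [hFd]; ring
      rw [e, hGW u hu]; ring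
    have i1 : IntegrableOn (fun u => f u * X u) (Icc 0 T) := hf.mul_continuousOn hXc isCompact_Icc
    have i2 : IntegrableOn (fun u => f u * Y u) (Icc 0 T) := hf.mul_continuousOn hYc isCompact_Icc
    have i2' : IntegrableOn (fun u => 2 * (f u * Y u)) (Icc 0 T) := i2.const_mul 2
    rw [c, intervalIntegral.integral_add (toII hT i1) (toII hT i2'),
      intervalIntegral.integral_const_mul]
  calc (∫ u in (0:ℝ)..T, f u * ∫ v in u..T, g v) ^ 2
      = (W 0) ^ 2 := by simp only [hWd, hFd, hGd]
    _ = 2 * (∫ u in (0:ℝ)..T, f u * X u) + 4 * ∫ u in (0:ℝ)..T, f u * Y u := by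
        rw [s1, s2]; ring
    _ = _ := by simp only [hXd, hWd, hFd, hGd, hYd, hQd]

/-- **Square of a 2-fold iterated integral operator:**
`(ω_{0,T}^{(k²,l²),(k¹,l¹)})² = 2 ω_{0,T}^{(k²,l²),(k¹,l¹),(k²,l²),(k¹,l¹)}
  + 4 ω_{0,T}^{(k²,l²),(k²,l²),(k¹,l¹),(k¹,l¹)}`. -/
theorem sq_iterated_integral_operator
    (T : ℝ) (hT : 0 < T) (k1 k2 l1 l2 : ℝ → ℝ)
    (hk1m : Measurable k1) (hk2m : Measurable k2)
    (hl1m : Measurable l1) (hl2m : Measurable l2)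
    (hk1 : IntegrableOn k1 (Set.Icc 0 T)) (hk2 : IntegrableOn k2 (Set.Icc 0 T))
    (hl1 : IntegrableOn l1 (Set.Icc 0 T)) (hl2 : IntegrableOn l2 (Set.Icc 0 T)) :
    (w2 k2 l2 k1 l1 0 T) ^ 2
      = 2 * w4 k2 l2 k1 l1 k2 l2 k1 l1 0 T + 4 * w4 k2 l2 k2 l2 k1 l1 k1 l1 0 T := by
  have hT' : (0:ℝ) ≤ T := hT.le
  have prim1 : ContinuousOn (fun u => ∫ z in (0:ℝ)..u, k1 z) (Set.Icc 0 T) := by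
    have h' : IntegrableOn k1 (Set.uIcc 0 T) := by rwa [Set.uIcc_of_le hT']
    have := intervalIntegral.continuousOn_primitive_interval (μ := volume) h'
    rwa [Set.uIcc_of_le hT'] at this
  have prim2 : ContinuousOn (fun u => ∫ z in (0:ℝ)..u, k2 z) (Set.Icc 0 T) := by
    have h' : IntegrableOn k2 (Set.uIcc 0 T) := by rwa [Set.uIcc_of_le hT']
    have := intervalIntegral.continuousOn_primitive_interval (μ := volume) h'
    rwa [Set.uIcc_of_le hT'] at this
  have hE1 : ContinuousOn (fun u => Real.exp (∫ z in (0:ℝ)..u, k1 z)) (Set.Icc 0 T) :=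
    Real.continuous_exp.comp_continuousOn prim1
  have hE2 : ContinuousOn (fun u => Real.exp (∫ z in (0:ℝ)..u, k2 z)) (Set.Icc 0 T) :=
    Real.continuous_exp.comp_continuousOn prim2
  have hg : IntegrableOn (fun u => l1 u * Real.exp (∫ z in (0:ℝ)..u, k1 z)) (Set.Icc 0 T) :=
    hl1.mul_continuousOn hE1 isCompact_Icc
  have hf : IntegrableOn (fun u => l2 u * Real.exp (∫ z in (0:ℝ)..u, k2 z)) (Set.Icc 0 T) :=
    hl2.mul_continuousOn hE2 isCompact_Icc
  have key : (∫ u in (0:ℝ)..T, (l2 u * Real.exp (∫ z in (0:ℝ)..u, k2 z)) *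
        ∫ v in u..T, l1 v * Real.exp (∫ z in (0:ℝ)..v, k1 z)) ^ 2
      = 2 * (∫ u in (0:ℝ)..T, (l2 u * Real.exp (∫ z in (0:ℝ)..u, k2 z)) *
            ∫ v in u..T, (l1 v * Real.exp (∫ z in (0:ℝ)..v, k1 z)) *
            ∫ s in v..T, (l2 s * Real.exp (∫ z in (0:ℝ)..s, k2 z)) *
            ∫ t in s..T, l1 t * Real.exp (∫ z in (0:ℝ)..t, k1 z))
        + 4 * (∫ u in (0:ℝ)..T, (l2 u * Real.exp (∫ z in (0:ℝ)..u, k2 z)) *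
            ∫ v in u..T, (l2 v * Real.exp (∫ z in (0:ℝ)..v, k2 z)) *
            ∫ s in v..T, (l1 s * Real.exp (∫ z in (0:ℝ)..s, k1 z)) *
            ∫ t in s..T, l1 t * Real.exp (∫ z in (0:ℝ)..t, k1 z)) :=
    key_shuffle hT' hf hg
  have e2' : ∀ v : ℝ, w2 k2 l2 k1 l1 v T
      = ∫ s in v..T, (l2 s * Real.exp (∫ z in (0:ℝ)..s, k2 z)) *
          ∫ t in s..T, l1 t * Real.exp (∫ z in (0:ℝ)..t, k1 z) := by
    intro v
    unfold w2 w1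
    exact intervalIntegral.integral_congr fun s _ => by ring
  have e2'' : ∀ v : ℝ, w2 k1 l1 k1 l1 v T
      = ∫ s in v..T, (l1 s * Real.exp (∫ z in (0:ℝ)..s, k1 z)) *
          ∫ t in s..T, l1 t * Real.exp (∫ z in (0:ℝ)..t, k1 z) := by
    intro v
    unfold w2 w1
    exact intervalIntegral.integral_congr fun s _ => by ring
  have e3a : ∀ u : ℝ, w3 k1 l1 k2 l2 k1 l1 u T
      = ∫ v in u..T, (l1 v * Real.exp (∫ z in (0:ℝ)..v, k1 z)) *
          ∫ s in v..T, (l2 s * Real.exp (∫ z in (0:ℝ)..s, k2 z)) *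
          ∫ t in s..T, l1 t * Real.exp (∫ z in (0:ℝ)..t, k1 z) := by
    intro u
    unfold w3 w1
    refine intervalIntegral.integral_congr fun v _ => ?_
    simp only [e2']; ring
  have e3b : ∀ u : ℝ, w3 k2 l2 k1 l1 k1 l1 u T
      = ∫ v in u..T, (l2 v * Real.exp (∫ z in (0:ℝ)..v, k2 z)) *
          ∫ s in v..T, (l1 s * Real.exp (∫ z in (0:ℝ)..s, k1 z)) *
          ∫ t in s..T, l1 t * Real.exp (∫ z in (0:ℝ)..t, k1 z) := by
    intro u
    unfold w3 w1
    refine intervalIntegral.integral_congr fun v _ => ?_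
    simp only [e2'']; ring
  have e4a : w4 k2 l2 k1 l1 k2 l2 k1 l1 0 T
      = ∫ u in (0:ℝ)..T, (l2 u * Real.exp (∫ z in (0:ℝ)..u, k2 z)) *
          ∫ v in u..T, (l1 v * Real.exp (∫ z in (0:ℝ)..v, k1 z)) *
          ∫ s in v..T, (l2 s * Real.exp (∫ z in (0:ℝ)..s, k2 z)) *
          ∫ t in s..T, l1 t * Real.exp (∫ z in (0:ℝ)..t, k1 z) := by
    unfold w4 w1
    refine intervalIntegral.integral_congr fun u _ => ?_
    simp only [e3a]; ring
  have e4b : w4 k2 l2 k2 l2 k1 l1 k1 l1 0 T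
      = ∫ u in (0:ℝ)..T, (l2 u * Real.exp (∫ z in (0:ℝ)..u, k2 z)) *
          ∫ v in u..T, (l2 v * Real.exp (∫ z in (0:ℝ)..v, k2 z)) *
          ∫ s in v..T, (l1 s * Real.exp (∫ z in (0:ℝ)..s, k1 z)) *
          ∫ t in s..T, l1 t * Real.exp (∫ z in (0:ℝ)..t, k1 z) := by
    unfold w4 w1
    refine intervalIntegral.integral_congr fun u _ => ?_
    simp only [e3b]; ring
  have e2 : w2 k2 l2 k1 l1 0 T
      = ∫ u in (0:ℝ)..T, (l2 u * Real.exp (∫ z in (0:ℝ)..u, k2 z)) *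
          ∫ v in u..T, l1 v * Real.exp (∫ z in (0:ℝ)..v, k1 z) := e2' 0
  rw [e2, e4a, e4b]
  exact key
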